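/- Consider the noise-free discrete-time LTI system x(k+1) = A x(k) + B u(k), y(k) = C x(k), and fix h ≥ 1 and t ≥ 1. If the extended observability matrix O_c(h) has rank m, then there exists a constant matrix R ∈ ℝ^{n×(hn+hp)} (depending only on A, B, C, h, t) such that for every trajectory (x, u, y) of the system and every k ≥ 0, y(k+h+t) = R · [Y(k;h); U(k;h)] + G(t) · U(k+h;t), where G(t) = [CA^{t−1}B, …, CAB, CB] is the extended Markov parameter matrix. -/
import Mathlib

open Matrix Finset

lemma aux_left_inv {N M : Type*} [Fintype N] [Fintype M] [DecidableEq N] [DecidableEq M]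
    (O : Matrix N M ℝ) (hr : O.rank = Fintype.card M) :
    ∃ P : Matrix M N ℝ, ∀ v : M → ℝ, P.mulVec (O.mulVec v) = v := by
  have h1 := LinearMap.finrank_range_add_finrank_ker O.mulVecLin
  have h2 : Module.finrank ℝ (LinearMap.range O.mulVecLin) = Fintype.card M := hr
  have h3 : Module.finrank ℝ (M → ℝ) = Fintype.card M := by simp
  rw [h2, h3] at h1
  have hker : LinearMap.ker O.mulVecLin = ⊥ :=
    Submodule.finrank_eq_zero.mp (by omega)
  obtain ⟨g, hg⟩ := O.mulVecLin.exists_leftInverse_of_injective hker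
  refine ⟨LinearMap.toMatrix' g, fun v => ?_⟩
  have h4 : (LinearMap.toMatrix' g).mulVec (O.mulVec v) = g (O.mulVecLin v) := by
    rw [← Matrix.toLin'_apply, Matrix.toLin'_toMatrix']
    rfl
  rw [h4]
  exact congrFun (congrArg DFunLike.coe hg) v

lemma aux_sum_trunc {N i : ℕ} (hi : i ≤ N) (g : ℕ → ℝ) :
    ∑ j ∈ Finset.range N, (if j < i then g j else 0) = ∑ j ∈ Finset.range i, g j := by
  rw [← Finset.sum_subset (Finset.range_subset_range.mpr hi)
      (fun j _ hj => if_neg (by simp [Finset.mem_range] at hj ⊢; omega))]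
  exact Finset.sum_congr rfl fun j hj => if_pos (Finset.mem_range.mp hj)

lemma aux_traj {m p : ℕ} (A : Matrix (Fin m) (Fin m) ℝ) (B : Matrix (Fin m) (Fin p) ℝ)
    (x : ℕ → Fin m → ℝ) (u : ℕ → Fin p → ℝ)
    (hxu : ∀ j, x (j + 1) = A.mulVec (x j) + B.mulVec (u j)) :
    ∀ (s k : ℕ), x (k + s) = (A ^ s).mulVec (x k)
      + ∑ j ∈ Finset.range s, (A ^ (s - 1 - j) * B).mulVec (u (k + j)) := by
  intro s
  induction s with
  | zero => intro k; simp
  | succ s ih =>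
    intro k
    have hk : k + (s + 1) = (k + s) + 1 := by omega
    rw [hk, hxu, ih, Finset.sum_range_succ]
    have hsum : A.mulVec ((A ^ s).mulVec (x k)
        + ∑ j ∈ Finset.range s, (A ^ (s - 1 - j) * B).mulVec (u (k + j)))
        = (A ^ (s + 1)).mulVec (x k)
          + ∑ j ∈ Finset.range s, (A ^ (s + 1 - 1 - j) * B).mulVec (u (k + j)) := by
      rw [Matrix.mulVec_add, Matrix.mulVec_mulVec, ← pow_succ']
      congr 1
      rw [show A.mulVec (∑ j ∈ Finset.range s, (A ^ (s - 1 - j) * B).mulVec (u (k + j)))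
          = A.mulVecLin (∑ j ∈ Finset.range s, (A ^ (s - 1 - j) * B).mulVec (u (k + j))) from rfl,
        map_sum]
      refine Finset.sum_congr rfl fun j hj => ?_
      rw [Matrix.mulVecLin_apply, Matrix.mulVec_mulVec, ← Matrix.mul_assoc, ← pow_succ']
      have : s - 1 - j + 1 = s + 1 - 1 - j := by
        have := Finset.mem_range.mp hj; omega
      rw [this]
    rw [hsum]
    have h0 : s + 1 - 1 - s = 0 := by omega
    rw [h0, pow_zero, Matrix.one_mul]
    abel

lemma aux_out {m n p : ℕ} (A : Matrix (Fin m) (Fin m) ℝ) (B : Matrix (Fin m) (Fin p) ℝ)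
    (C : Matrix (Fin n) (Fin m) ℝ)
    (x : ℕ → Fin m → ℝ) (u : ℕ → Fin p → ℝ) (y : ℕ → Fin n → ℝ)
    (hxu : ∀ j, x (j + 1) = A.mulVec (x j) + B.mulVec (u j))
    (hyx : ∀ j, y j = C.mulVec (x j)) :
    ∀ (i k : ℕ), y (k + i) = (C * A ^ i).mulVec (x k)
      + ∑ j ∈ Finset.range i, (C * A ^ (i - 1 - j) * B).mulVec (u (k + j)) := by
  intro i k
  rw [hyx, aux_traj A B x u hxu i k, Matrix.mulVec_add, Matrix.mulVec_mulVec]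
  congr 1
  rw [show C.mulVec (∑ j ∈ Finset.range i, (A ^ (i - 1 - j) * B).mulVec (u (k + j)))
      = C.mulVecLin (∑ j ∈ Finset.range i, (A ^ (i - 1 - j) * B).mulVec (u (k + j))) from rfl,
    map_sum]
  refine Finset.sum_congr rfl fun j hj => ?_
  rw [Matrix.mulVecLin_apply, Matrix.mulVec_mulVec, Matrix.mul_assoc]

/-- For the noise-free LTI system `x(k+1) = A x(k) + B u(k)`,
`y(k) = C x(k)`, if the extended observability matrix `O_c(h)` has rank `m`,
then there exists a constant matrix `R ∈ ℝ^{n×(hn+hp)}` (depending only on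
`A, B, C, h, t`) such that for every trajectory `(x,u,y)` and every `k`,
`y(k+h+t) = R · [Y(k;h); U(k;h)] + G(t) · U(k+h;t)`, where
`G(t) = [C A^(t-1) B, …, C A B, C B]` is the extended Markov parameter matrix. -/
theorem output_prediction_form
    (m n p : ℕ) (h t : ℕ) (hh : 1 ≤ h) (ht : 1 ≤ t)
    (A : Matrix (Fin m) (Fin m) ℝ) (B : Matrix (Fin m) (Fin p) ℝ)
    (C : Matrix (Fin n) (Fin m) ℝ)
    (hrank : (Matrix.of fun (ia : Fin h × Fin n) (b : Fin m) =>
        (C * A ^ (ia.1 : ℕ)) ia.2 b : Matrix (Fin h × Fin n) (Fin m) ℝ).rank = m) :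
    ∃ R : Matrix (Fin n) ((Fin h × Fin n) ⊕ (Fin h × Fin p)) ℝ,
      ∀ (x : ℕ → Fin m → ℝ) (u : ℕ → Fin p → ℝ) (y : ℕ → Fin n → ℝ),
        (∀ j, x (j + 1) = A.mulVec (x j) + B.mulVec (u j)) →
        (∀ j, y j = C.mulVec (x j)) →
        ∀ k : ℕ,
          y (k + h + t) =
            R.mulVec
              (Sum.elim (fun ia : Fin h × Fin n => y (k + (ia.1 : ℕ)) ia.2)
                        (fun jb : Fin h × Fin p => u (k + (jb.1 : ℕ)) jb.2)) +
            (Matrix.of fun (a : Fin n) (jb : Fin t × Fin p) =>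
                (C * A ^ (t - 1 - (jb.1 : ℕ)) * B) a jb.2).mulVec
              (fun jb : Fin t × Fin p => u (k + h + (jb.1 : ℕ)) jb.2) := by
  classical
  set O : Matrix (Fin h × Fin n) (Fin m) ℝ :=
    Matrix.of fun ia b => (C * A ^ (ia.1 : ℕ)) ia.2 b with hOdef
  obtain ⟨P, hP⟩ := aux_left_inv O (by simpa using hrank)
  set T : Matrix (Fin h × Fin n) (Fin h × Fin p) ℝ :=
    Matrix.of fun ia jb => if (jb.1 : ℕ) < (ia.1 : ℕ)
      then (C * A ^ ((ia.1 : ℕ) - 1 - (jb.1 : ℕ)) * B) ia.2 jb.2 else 0 with hTdef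
  set Mm : Matrix (Fin n) (Fin h × Fin p) ℝ :=
    Matrix.of fun a jb => (C * A ^ (h + t - 1 - (jb.1 : ℕ)) * B) a jb.2 with hMdef
  set Q : Matrix (Fin n) (Fin h × Fin n) ℝ := C * A ^ (h + t) * P with hQdef
  refine ⟨Matrix.of (fun a s => Sum.elim (fun ia => Q a ia)
      (fun jb => (Mm - Q * T) a jb) s), ?_⟩
  intro x u y hxu hyx k
  set Yv : Fin h × Fin n → ℝ := fun ia => y (k + (ia.1 : ℕ)) ia.2 with hYv
  set Uv : Fin h × Fin p → ℝ := fun jb => u (k + (jb.1 : ℕ)) jb.2 with hUv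
  set Uv' : Fin t × Fin p → ℝ := fun jb => u (k + h + (jb.1 : ℕ)) jb.2 with hUv'
  -- Step A: Yv = O.mulVec (x k) + T.mulVec Uv
  have hYeq : Yv = O.mulVec (x k) + T.mulVec Uv := by
    funext ia
    have hout := congrFun (aux_out A B C x u y hxu hyx (ia.1 : ℕ) k) ia.2
    have e1 : ((C * A ^ (ia.1 : ℕ)).mulVec (x k)) ia.2 = (O.mulVec (x k)) ia := by
      simp [Matrix.mulVec, dotProduct, hOdef]
    have e2 : (∑ j ∈ Finset.range (ia.1 : ℕ),
          (C * A ^ ((ia.1 : ℕ) - 1 - j) * B).mulVec (u (k + j))) ia.2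
        = (T.mulVec Uv) ia := by
      rw [Finset.sum_apply]
      have hrhs : (T.mulVec Uv) ia = ∑ jb : Fin h × Fin p, T ia jb * Uv jb := rfl
      rw [hrhs, Fintype.sum_prod_type]
      have hstep : ∀ j : Fin h, ∑ b : Fin p, T ia (j, b) * Uv (j, b)
          = (if (j : ℕ) < (ia.1 : ℕ)
              then ∑ b : Fin p, (C * A ^ ((ia.1 : ℕ) - 1 - (j : ℕ)) * B) ia.2 b
                * u (k + (j : ℕ)) b else 0) := by
        intro j
        by_cases hji : (j : ℕ) < (ia.1 : ℕ)
        · rw [if_pos hji]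
          refine Finset.sum_congr rfl fun b _ => ?_
          have hT1 : T ia (j, b) = (C * A ^ ((ia.1 : ℕ) - 1 - (j : ℕ)) * B) ia.2 b := by
            show (if (j : ℕ) < (ia.1 : ℕ) then _ else 0) = _
            rw [if_pos hji]
          rw [hT1]
        · rw [if_neg hji]
          refine Finset.sum_eq_zero fun b _ => ?_
          have hT0 : T ia (j, b) = 0 := by
            show (if (j : ℕ) < (ia.1 : ℕ) then _ else 0) = 0
            rw [if_neg hji]
          rw [hT0, zero_mul]
      rw [Finset.sum_congr rfl (fun j _ => hstep j),
        Fin.sum_univ_eq_sum_range (fun j => if j < (ia.1 : ℕ)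
          then ∑ b : Fin p, (C * A ^ ((ia.1 : ℕ) - 1 - j) * B) ia.2 b * u (k + j) b else 0) h,
        aux_sum_trunc (le_of_lt ia.1.isLt)]
      exact Finset.sum_congr rfl fun j _ => by simp [Matrix.mulVec, dotProduct]
    show y (k + (ia.1 : ℕ)) ia.2 = _
    rw [hout]
    simp only [Pi.add_apply]
    rw [e1, e2]
  -- Step B: x k = P.mulVec (Yv - T.mulVec Uv)
  have hxk : x k = P.mulVec (Yv - T.mulVec Uv) := by
    rw [hYeq, add_sub_cancel_right, hP]
  -- main computation
  have hkht : k + h + t = k + (h + t) := by omega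
  rw [hkht, aux_out A B C x u y hxu hyx (h + t) k, Finset.sum_range_add]
  -- first block sum = Mm.mulVec Uv
  have hM : ∑ j ∈ Finset.range h, (C * A ^ (h + t - 1 - j) * B).mulVec (u (k + j))
      = Mm.mulVec Uv := by
    funext a
    rw [Finset.sum_apply, Matrix.mulVec, dotProduct, Fintype.sum_prod_type,
      ← Fin.sum_univ_eq_sum_range]
    exact Finset.sum_congr rfl fun j _ => by simp [Matrix.mulVec, dotProduct, hMdef, hUv]
  -- second block sum = G.mulVec Uv'
  have hG : ∑ j ∈ Finset.range t, (C * A ^ (h + t - 1 - (h + j)) * B).mulVec (u (k + (h + j)))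
      = (Matrix.of fun (a : Fin n) (jb : Fin t × Fin p) =>
          (C * A ^ (t - 1 - (jb.1 : ℕ)) * B) a jb.2).mulVec Uv' := by
    funext a
    rw [Finset.sum_apply, Matrix.mulVec, dotProduct, Fintype.sum_prod_type,
      ← Fin.sum_univ_eq_sum_range]
    refine Finset.sum_congr rfl fun j _ => ?_
    have h1 : h + t - 1 - (h + (j : ℕ)) = t - 1 - (j : ℕ) := by omega
    have h2 : k + (h + (j : ℕ)) = k + h + (j : ℕ) := by omega
    rw [h1, h2]
    simp [Matrix.mulVec, dotProduct, hUv']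
  -- state term
  have hstate : (C * A ^ (h + t)).mulVec (x k)
      = Q.mulVec Yv - (Q * T).mulVec Uv := by
    rw [hxk, Matrix.mulVec_mulVec, ← hQdef, Matrix.mulVec_sub, Matrix.mulVec_mulVec]
  -- R applied
  have hR : (Matrix.of (fun a s => Sum.elim (fun ia => Q a ia)
        (fun jb => (Mm - Q * T) a jb) s)).mulVec (Sum.elim Yv Uv)
      = Q.mulVec Yv + (Mm - Q * T).mulVec Uv := by
    funext a
    simp [Matrix.mulVec, dotProduct, Fintype.sum_sum_type]
  rw [hM, hG, hstate, hR, Matrix.sub_mulVec]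
  abel
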